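/- Let H be a real inner product space and σ > 0. Then the Gaussian kernel on H is positive definite: for every n, every φ_1, …, φ_n ∈ H and every c_1, …, c_n ∈ ℝ, one has Σ_{i,j} c_i c_j exp(-‖φ_i - φ_j‖²/(2σ²)) ≥ 0. -/

import Mathlib

/-!
Expanding `‖x - y‖² = ‖x‖² - 2⟪x, y⟫ + ‖y‖²` writes the Gaussian kernel matrix as `D * E * D`,
where `D` is diagonal and `E` is the entrywise exponential of a nonnegative multiple of the Gram
matrix. The exponential series exhibits `E` as a limit of nonnegative combinations of entrywise
powers of a positive semidefinite matrix, and these powers are positive semidefinite by the Schur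
product theorem.
-/

theorem exp_neg_mul_norm_sub_sq {H : Type*} [NormedAddCommGroup H] [InnerProductSpace ℝ H]
    (t : ℝ) (x y : H) :
    Real.exp (-t * ‖x - y‖ ^ 2) =
      Real.exp (-t * ‖x‖ ^ 2) * Real.exp (2 * t * inner ℝ x y) * Real.exp (-t * ‖y‖ ^ 2) := by
  rw [← Real.exp_add, ← Real.exp_add, norm_sub_sq_real]
  ring_nf

namespace Matrix

open scoped ComplexOrder

theorem PosSemidef.map_pow {𝕜 ι : Type*} [RCLike 𝕜] [Finite ι] {A : Matrix ι ι 𝕜}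
    (hA : A.PosSemidef) (m : ℕ) : (A.map (· ^ m)).PosSemidef := by
  induction m with
  | zero =>
    convert posSemidef_gram 𝕜 (fun _ : ι ↦ (1 : 𝕜)) using 1
    ext i j
    simp
  | succ m ih =>
    have hsucc : A.map (· ^ (m + 1)) = A.map (· ^ m) ⊙ A := by
      ext i j
      simp [pow_succ]
    exact hsucc ▸ ih.hadamard hA

theorem PosSemidef.map_exp {ι : Type*} [Fintype ι] {A : Matrix ι ι ℝ}
    (hA : A.PosSemidef) : (A.map Real.exp).PosSemidef := by
  refine .of_dotProduct_mulVec_nonneg (hA.isHermitian.map _ fun _ ↦ rfl) fun x ↦ ?_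
  have hexp (i j : ι) :
      HasSum (fun m : ℕ ↦ (m.factorial : ℝ)⁻¹ * A i j ^ m) (Real.exp (A i j)) := by
    simpa [Real.exp_eq_exp_ℝ, div_eq_inv_mul] using NormedSpace.expSeries_div_hasSum_exp (A i j)
  have hquad : HasSum (fun m : ℕ ↦ star x ⬝ᵥ (((m.factorial : ℝ)⁻¹ • A.map (· ^ m)) *ᵥ x))
      (star x ⬝ᵥ (A.map Real.exp *ᵥ x)) := by
    simp only [dotProduct, mulVec, smul_apply, map_apply, smul_eq_mul]
    exact hasSum_sum fun i _ ↦
      (hasSum_sum fun j _ ↦ (hexp i j).mul_right (x j)).mul_left (star x i)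
  exact hquad.nonneg fun m ↦
    ((hA.map_pow m).smul (by positivity)).dotProduct_mulVec_nonneg x

theorem posSemidef_exp_neg_mul_norm_sub_sq {ι H : Type*} [Fintype ι]
    [NormedAddCommGroup H] [InnerProductSpace ℝ H] {t : ℝ} (ht : 0 ≤ t) (v : ι → H) :
    (of fun i j ↦ Real.exp (-t * ‖v i - v j‖ ^ 2)).PosSemidef := by
  classical
  let D : Matrix ι ι ℝ := diagonal fun i ↦ Real.exp (-t * ‖v i‖ ^ 2)
  have hexp : ((2 * t) • gram ℝ v).map Real.exp |>.PosSemidef :=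
    ((posSemidef_gram ℝ v).smul (by positivity)).map_exp
  convert hexp.mul_mul_conjTranspose_same D using 1
  ext i j
  simpa [D] using exp_neg_mul_norm_sub_sq t (v i) (v j)

end Matrix

theorem gaussian_kernel_pos_def_inner_product_space_general
    {H : Type*} [NormedAddCommGroup H] [InnerProductSpace ℝ H]
    (σ : ℝ)
    (n : ℕ) (φ : Fin n → H) (c : Fin n → ℝ) :
    0 ≤ ∑ i, ∑ j, c i * c j * Real.exp (-‖φ i - φ j‖ ^ 2 / (2 * σ ^ 2)) := by
  have hK := (Matrix.posSemidef_exp_neg_mul_norm_sub_sq (t := (2 * σ ^ 2)⁻¹) (by positivity)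
    φ).dotProduct_mulVec_nonneg c
  simp only [dotProduct, Matrix.mulVec, Matrix.of_apply, star_trivial, Finset.mul_sum] at hK
  refine hK.trans_eq (Finset.sum_congr rfl fun i _ ↦ Finset.sum_congr rfl fun j _ ↦ ?_)
  ring_nf

/-- The Gaussian kernel on a real inner product space `H` is positive definite. -/
theorem gaussian_kernel_pos_def_inner_product_space
    {H : Type*} [NormedAddCommGroup H] [InnerProductSpace ℝ H]
    (σ : ℝ) (hσ : 0 < σ)
    (n : ℕ) (φ : Fin n → H) (c : Fin n → ℝ) :
    0 ≤ ∑ i, ∑ j, c i * c j * Real.exp (-‖φ i - φ j‖ ^ 2 / (2 * σ ^ 2)) :=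
  gaussian_kernel_pos_def_inner_product_space_general σ n φ c
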